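/- arXiv:1406.3069 — 2 statements merged into one kernel-verified Lean document; each statement's English description precedes it below -/
import Mathlib

section
/- If H is a closed conformal Killing-Yano tensor of order p, satisfying ∇_a H_{b₁…b_p} = 2 g_{a[b₁} h_{b₂…b_p]}, and t is an affinely parameterized geodesic vector field, then the antisymmetric tensor P̂_{b c₁…c_p} = t_{[b} H_{c₁…c_p]} satisfies t^a ∇_a P̂_{b c₁…c_p} = 0, i.e. it is conserved along the geodesics tangent to t. -/
/-!
Contracting with `t^a`, the term `t^a ∇_a t_b` vanishes by the geodesic equation, and the CCKY
equation turns `t^a ∇_a H_{c₁…c_p}` into `2 t_{[c₁} h_{c₂…c_p]}`. The outer antisymmetrization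
absorbs the inner one, so `t^a ∇_a P̂ = 2 t_{[b} t_{c₁} h_{c₂…c_p]}`, which vanishes because
`t_b t_{c₁}` is symmetric in `b` and `c₁`.
-/

open Finset

/-- The sign of a permutation, as a real number. -/
noncomputable def esign {p : ℕ} (σ : Equiv.Perm (Fin p)) : ℝ :=
  ((Equiv.Perm.sign σ : ℤ) : ℝ)

/-- A rank-`p` tensor (in components) is totally antisymmetric. -/
def IsAlt {ι : Type*} {p : ℕ} (T : (Fin p → ι) → ℝ) : Prop :=
  ∀ (σ : Equiv.Perm (Fin p)) (v : Fin p → ι), T (v ∘ σ) = esign σ * T v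

/-- Antisymmetrization of a rank-`p` tensor (with the `1/p!` factor). -/
noncomputable def alt {ι : Type*} {p : ℕ} (T : (Fin p → ι) → ℝ) : (Fin p → ι) → ℝ :=
  fun v => (Nat.factorial p : ℝ)⁻¹ * ∑ σ : Equiv.Perm (Fin p), esign σ * T (v ∘ σ)

/-- The tensor `g_{a[b₁} h_{b₂…b_{q+1}]}` :
antisymmetrization over the last `q+1` indices of `g_{a b₁} h_{b₂…b_{q+1}}`. -/
noncomputable def ghAlt {ι : Type*} {q : ℕ} (g : ι → ι → ℝ) (h : (Fin q → ι) → ℝ)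
    (a : ι) : (Fin (q + 1) → ι) → ℝ :=
  alt fun v => g a (v 0) * h fun i => v i.succ

/-- View a "derivative" `D : ι → ((Fin p → ι) → ℝ)` as a rank-`(p+1)` tensor. -/
def totalD {ι : Type*} {p : ℕ} (D : ι → (Fin p → ι) → ℝ) : (Fin (p + 1) → ι) → ℝ :=
  fun w => D (w 0) fun i => w i.succ

section Antisymmetrization

variable {ι : Type*} {p : ℕ}

lemma esign_mul (σ τ : Equiv.Perm (Fin p)) : esign (σ * τ) = esign σ * esign τ := by
  simp [esign]

lemma esign_inv (σ : Equiv.Perm (Fin p)) : esign σ⁻¹ = esign σ := by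
  simp [esign]

lemma esign_mul_self (σ : Equiv.Perm (Fin p)) : esign σ * esign σ = 1 := by
  rw [← esign_mul, esign, map_mul, Int.units_mul_self, Units.val_one, Int.cast_one]

lemma alt_const_mul (c : ℝ) (F : (Fin p → ι) → ℝ) (w : Fin p → ι) :
    alt (fun v => c * F v) w = c * alt F w := by
  simp only [alt, Finset.mul_sum]
  exact Finset.sum_congr rfl fun σ _ => by ring

lemma sum_mul_alt {α : Type*} [Fintype α] (c : α → ℝ) (F : α → (Fin p → ι) → ℝ)
    (w : Fin p → ι) : ∑ a, c a * alt (F a) w = alt (fun v => ∑ a, c a * F a v) w := by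
  simp only [alt, Finset.mul_sum]
  rw [Finset.sum_comm]
  exact Finset.sum_congr rfl fun σ _ => Finset.sum_congr rfl fun a _ => by ring

lemma alt_comp_perm (F : (Fin p → ι) → ℝ) (τ : Equiv.Perm (Fin p)) (w : Fin p → ι) :
    alt (fun v => F (v ∘ τ)) w = esign τ * alt F w := by
  have reindex := Equiv.sum_comp (Equiv.mulRight τ) fun π => esign (π * τ⁻¹) * F (w ∘ π)
  simp only [Equiv.coe_mulRight, mul_inv_cancel_right, esign_mul, esign_inv] at reindex
  simp only [alt, Equiv.Perm.coe_mul, ← Function.comp_assoc] at reindex ⊢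
  rw [reindex, Finset.mul_sum, Finset.mul_sum, Finset.mul_sum]
  exact Finset.sum_congr rfl fun σ _ => by ring

lemma alt_eq_zero_of_comp_perm_eq (F : (Fin p → ι) → ℝ) (τ : Equiv.Perm (Fin p))
    (hτ : esign τ = -1) (hF : ∀ v, F (v ∘ τ) = F v) (w : Fin p → ι) : alt F w = 0 := by
  have h := alt_comp_perm F τ w
  simp only [hF, hτ] at h
  linarith

/-- Each term of the inner antisymmetrization is the outer one precomposed with a permutation
fixing `0`, of the same sign. -/
lemma alt_mul_alt_tail (f : ι → ℝ) (S : (Fin p → ι) → ℝ) (w : Fin (p + 1) → ι) :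
    alt (fun v => f (v 0) * alt S (fun i => v i.succ)) w
      = alt (fun v => f (v 0) * S (fun i => v i.succ)) w := by
  set F : (Fin (p + 1) → ι) → ℝ := fun v => f (v 0) * S (fun i => v i.succ)
  have lift : ∀ σ : Equiv.Perm (Fin p),
      alt (fun v => f (v 0) * S ((fun i => v i.succ) ∘ σ)) w = esign σ * alt F w := by
    intro σ
    have h := alt_comp_perm F (Equiv.Perm.decomposeFin.symm (0, σ)) w
    simpa [F, esign, Function.comp_def] using h
  calc alt (fun v => f (v 0) * alt S (fun i => v i.succ)) w
      = (p.factorial : ℝ)⁻¹ * ∑ σ : Equiv.Perm (Fin p),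
          esign σ * alt (fun v => f (v 0) * S ((fun i => v i.succ) ∘ σ)) w := by
        rw [sum_mul_alt, ← alt_const_mul]
        congr 1
        funext v
        simp only [alt, Finset.mul_sum]
        exact Finset.sum_congr rfl fun σ _ => by ring
    _ = alt F w := by
        simp only [lift, ← mul_assoc, esign_mul_self, one_mul, Finset.sum_const,
          Finset.card_univ, Fintype.card_perm, Fintype.card_fin, nsmul_eq_mul]
        field_simp

lemma alt_mul_mul_eq_zero (f : ι → ℝ) (S : (Fin p → ι) → ℝ) (w : Fin (p + 2) → ι) :
    alt (fun v => f (v 0) * (f (v 1) * S (fun i => v i.succ.succ))) w = 0 := by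
  refine alt_eq_zero_of_comp_perm_eq _ (Equiv.swap 0 1) ?_ ?_ w
  · simp [esign]
  · intro v
    have tail_fixed : ∀ i : Fin p, Equiv.swap (0 : Fin (p + 2)) 1 i.succ.succ = i.succ.succ :=
      fun i => Equiv.swap_apply_of_ne_of_ne (Fin.succ_ne_zero _) (Fin.succ_succ_ne_one _)
    simp only [Function.comp_apply, Equiv.swap_apply_left, Equiv.swap_apply_right, tail_fixed]
    ring

end Antisymmetrization

lemma sum_mul_ghAlt {ι : Type*} [Fintype ι] {q : ℕ} (g : ι → ι → ℝ)
    (hg : ∀ a b, g a b = g b a) (h : (Fin q → ι) → ℝ) (t : ι → ℝ) (u : Fin (q + 1) → ι) :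
    ∑ a, t a * ghAlt g h a u
      = alt (fun v => (∑ d, g (v 0) d * t d) * h (fun i => v i.succ)) u := by
  unfold ghAlt
  rw [sum_mul_alt]
  congr 1
  funext v
  rw [Finset.sum_mul]
  exact Finset.sum_congr rfl fun a _ => by rw [hg]; ring

lemma sum_mul_geodesic_contraction {ι : Type*} [Fintype ι] (t : ι → ℝ) (Dt : ι → ι → ℝ)
    (hgeo : ∀ b, ∑ a, t a * Dt a b = 0) (c : ι → ℝ) (x : ℝ) :
    ∑ a, t a * ((∑ d, c d * Dt a d) * x) = 0 := by
  simp only [Finset.sum_mul, Finset.mul_sum]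
  rw [Finset.sum_comm]
  refine Finset.sum_eq_zero fun d _ => ?_
  calc ∑ a, t a * (c d * Dt a d * x) = c d * x * ∑ a, t a * Dt a d := by
        rw [Finset.mul_sum]
        exact Finset.sum_congr rfl fun a _ => by ring
    _ = 0 := by rw [hgeo, mul_zero]

/-- `D a v` encodes `∇_a H_v` and `Dt a d` encodes `∇_a t^d`; the antisymmetrized expression is
`∇_a P̂` expanded by the Leibniz rule, with `t_b = g_{bd} t^d` and `∇_a t_b = g_{bd} ∇_a t^d`. -/
theorem statement5_general {ι : Type*} [Fintype ι] {q : ℕ}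
    (g : ι → ι → ℝ) (hgsymm : ∀ a b, g a b = g b a)
    (H : (Fin (q + 1) → ι) → ℝ)
    (h : (Fin q → ι) → ℝ)
    (D : ι → (Fin (q + 1) → ι) → ℝ)
    (hCCKY : ∀ (a : ι) (v : Fin (q + 1) → ι), D a v = 2 * ghAlt g h a v)
    (t : ι → ℝ) (Dt : ι → ι → ℝ) (hgeo : ∀ b, ∑ a, t a * Dt a b = 0) :
    ∀ w : Fin (q + 2) → ι,
      ∑ a, t a *
        alt (fun w' : Fin (q + 2) → ι =>
          (∑ d, g (w' 0) d * Dt a d) * H (fun i => w' i.succ)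
            + (∑ d, g (w' 0) d * t d) * D a (fun i => w' i.succ)) w = 0 := by
  intro w
  obtain ⟨tb, htb⟩ : ∃ tb : ι → ℝ, ∀ b, ∑ d, g b d * t d = tb b := ⟨_, fun _ => rfl⟩
  have pointwise : ∀ v : Fin (q + 2) → ι,
      ∑ a, t a * ((∑ d, g (v 0) d * Dt a d) * H (fun i => v i.succ)
        + tb (v 0) * D a (fun i => v i.succ))
      = 2 * (tb (v 0) * alt (fun u => tb (u 0) * h (fun i => u i.succ)) (fun i => v i.succ)) := by
    intro v
    have contraction := sum_mul_ghAlt g hgsymm h t (fun i => v i.succ)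
    simp only [htb] at contraction
    simp only [mul_add, Finset.sum_add_distrib, sum_mul_geodesic_contraction t Dt hgeo, zero_add,
      hCCKY, ← contraction, Finset.mul_sum]
    exact Finset.sum_congr rfl fun a _ => by ring
  simp only [htb, sum_mul_alt, pointwise]
  rw [alt_const_mul, alt_mul_alt_tail]
  exact mul_eq_zero_of_right 2 (alt_mul_mul_eq_zero tb h w)

/-- If `H` is a closed conformal Killing–Yano tensor of order
`p = q+1` (`∇_a H_{b₁…b_p} = 2 g_{a[b₁} h_{b₂…b_p]}`, with `D a v = ∇_a H_v`) and `t`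
is an affinely parameterized geodesic vector field (`t^a ∇_a t^b = 0`), then
`P̂_{b c₁…c_p} = t_{[b} H_{c₁…c_p]}` satisfies `t^a ∇_a P̂ = 0`.  Here
`t_b = g_{bd} t^d` and `∇_a t_b = g_{bd} ∇_a t^d` (metric compatibility), so
`∇_a P̂` is the antisymmetrization of `(∇_a t_b) H_{c₁…c_p} + t_b ∇_a H_{c₁…c_p}`. -/
theorem statement5 {ι : Type*} [Fintype ι] {q : ℕ}
    (g : ι → ι → ℝ) (hgsymm : ∀ a b, g a b = g b a)
    (H : (Fin (q + 1) → ι) → ℝ) (hHalt : IsAlt H)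
    (h : (Fin q → ι) → ℝ) (hhalt : IsAlt h)
    (D : ι → (Fin (q + 1) → ι) → ℝ) (hDalt : ∀ a, IsAlt (D a))
    (hCCKY : ∀ (a : ι) (v : Fin (q + 1) → ι), D a v = 2 * ghAlt g h a v)
    (t : ι → ℝ) (Dt : ι → ι → ℝ) (hgeo : ∀ b, ∑ a, t a * Dt a b = 0) :
    ∀ w : Fin (q + 2) → ι,
      ∑ a, t a *
        alt (fun w' : Fin (q + 2) → ι =>
          (∑ d, g (w' 0) d * Dt a d) * H (fun i => w' i.succ)
            + (∑ d, g (w' 0) d * t d) * D a (fun i => w' i.succ)) w = 0 :=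
  statement5_general g hgsymm H h D hCCKY t Dt hgeo
end

section
/- Let (M,g) be an Einstein space (R_{ab} = Λ g_{ab}) of dimension n > 2 and let Y be a conformal Killing-Yano tensor of order 2 with associated one-form h. Then h is a Killing vector field: ∇_a h_b + ∇_b h_a = 0. -/
set_option autoImplicit false

/-!
Write `P_{abcd} = ∇_a ∇_b Y_{cd}`; the derivative of the CKY equation expresses `P` through its
cyclic sum in `b c d` and `∇h`. Tracing it over the slot pairs `ab`, `ac`, `bc`, `cd` and
symmetrizing in the two free indices gives four linear relations between the symmetrized traces of
`P`, `∇_{(a}h_{b)}` and `g_{ab} ∇^c h_c`. The Ricci identity compares the traces over `ac` with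
those over `bc`, and over `ad` with those over `bd`; on an Einstein space its curvature terms are
`Λ Y` and a contraction `R^x{}_{bd}{}^f Y_{xf}`, both antisymmetric, so the symmetric parts agree.
Eliminating the traces leaves `(n - 2) ∇_{(a}h_{b)} = -g_{ab} ∇^c h_c`, whose trace forces
`∇^c h_c = 0`, hence `∇_{(a}h_{b)} = 0` as `n > 2`.
-/

open Finset

namespace ConformalKillingYano

variable {ι : Type*} [Fintype ι]

def contract (ginv T : ι → ι → ℝ) : ℝ := ∑ x, ∑ y, ginv x y * T x y

section contract

variable {ginv : ι → ι → ℝ}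

theorem contract_congr {T U : ι → ι → ℝ} (h : ∀ x y, T x y = U x y) :
    contract ginv T = contract ginv U := by
  simp only [contract, h]

theorem contract_add (T U : ι → ι → ℝ) :
    contract ginv (fun x y => T x y + U x y) = contract ginv T + contract ginv U := by
  simp only [contract, mul_add, sum_add_distrib]

theorem contract_sub (T U : ι → ι → ℝ) :
    contract ginv (fun x y => T x y - U x y) = contract ginv T - contract ginv U := by
  simp only [contract, mul_sub, sum_sub_distrib]

theorem contract_neg (T : ι → ι → ℝ) :
    contract ginv (fun x y => -T x y) = -contract ginv T := by
  simp only [contract, mul_neg, sum_neg_distrib]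

theorem contract_const_mul (r : ℝ) (T : ι → ι → ℝ) :
    contract ginv (fun x y => r * T x y) = r * contract ginv T := by
  simp only [contract, mul_sum]
  exact sum_congr rfl fun _ _ => sum_congr rfl fun _ _ => by ring

theorem contract_mul_const (T : ι → ι → ℝ) (r : ℝ) :
    contract ginv (fun x y => T x y * r) = contract ginv T * r := by
  simp only [contract, sum_mul]
  exact sum_congr rfl fun _ _ => sum_congr rfl fun _ _ => by ring

theorem contract_swap (hginv : ∀ a b, ginv a b = ginv b a) (T : ι → ι → ℝ) :
    contract ginv (fun x y => T y x) = contract ginv T := by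
  rw [contract, sum_comm]
  exact sum_congr rfl fun _ _ => sum_congr rfl fun _ _ => by rw [hginv]

theorem contract_comm (T : ι → ι → ι → ι → ℝ) :
    contract ginv (fun x y => contract ginv fun e f => T x y e f)
      = contract ginv (fun e f => contract ginv fun x y => T x y e f) := by
  simp only [contract, mul_sum]
  calc ∑ x, ∑ y, ∑ e, ∑ f, ginv x y * (ginv e f * T x y e f)
      = ∑ x, ∑ e, ∑ y, ∑ f, ginv x y * (ginv e f * T x y e f) :=
        sum_congr rfl fun _ _ => sum_comm
    _ = ∑ e, ∑ x, ∑ f, ∑ y, ginv x y * (ginv e f * T x y e f) :=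
        sum_comm.trans (sum_congr rfl fun _ _ => sum_congr rfl fun _ _ => sum_comm)
    _ = ∑ e, ∑ f, ∑ x, ∑ y, ginv e f * (ginv x y * T x y e f) :=
        sum_congr rfl fun _ _ => sum_comm.trans (sum_congr rfl fun _ _ =>
          sum_congr rfl fun _ _ => sum_congr rfl fun _ _ => by ring)

variable [DecidableEq ι] {g : ι → ι → ℝ}

theorem contract_metric_right (hinv : ∀ a b, ∑ c, ginv a c * g c b = if a = b then 1 else 0)
    (f : ι → ℝ) (d : ι) : contract ginv (fun x y => g y d * f x) = f d := by
  have hrow : ∀ x, ∑ y, ginv x y * (g y d * f x) = (if x = d then 1 else 0) * f x := fun x => by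
    rw [← hinv x d, sum_mul]
    exact sum_congr rfl fun _ _ => by ring
  simp [contract, hrow]

theorem contract_metric_left (hginv : ∀ a b, ginv a b = ginv b a)
    (hinv : ∀ a b, ∑ c, ginv a c * g c b = if a = b then 1 else 0) (f : ι → ℝ) (d : ι) :
    contract ginv (fun x y => g x d * f y) = f d := by
  rw [← contract_metric_right hinv f d, ← contract_swap hginv]

theorem contract_metric (hg : ∀ a b, g a b = g b a)
    (hinv : ∀ a b, ∑ c, ginv a c * g c b = if a = b then 1 else 0) :
    contract ginv g = Fintype.card ι := by
  have hrow : ∀ x, ∑ y, ginv x y * g x y = 1 := fun x => by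
    simpa [hg x] using hinv x x
  simp [contract, hrow]

end contract

/-- `P a b c d` stands for `∇_a ∇_b Y_{cd}` and `Dh a d` for `∇_a h_d`: this is `∇_a` of the
CKY equation `∇_b Y_{cd} = ∇_{[b} Y_{cd]} + 2 g_{b[c} h_{d]}`. -/
def IsCKYHessian (g Dh : ι → ι → ℝ) (P : ι → ι → ι → ι → ℝ) : Prop :=
  ∀ a b c d, P a b c d
    = (1 / 3) * (P a b c d + P a c d b + P a d b c) + g b c * Dh a d - g b d * Dh a c

namespace IsCKYHessian

variable [DecidableEq ι] {g ginv Dh : ι → ι → ℝ} {P : ι → ι → ι → ι → ℝ}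

theorem trace_ab (hP : IsCKYHessian g Dh P)
    (hinv : ∀ a b, ∑ c, ginv a c * g c b = if a = b then 1 else 0) (c d : ι) :
    2 * contract ginv (fun x y => P x y c d) - contract ginv (fun x y => P x c d y)
      - contract ginv (fun x y => P x d y c) = 3 * Dh c d - 3 * Dh d c := by
  have h := contract_congr (ginv := ginv) fun x y => (by linear_combination 3 * hP x y c d :
    2 * P x y c d - P x c d y - P x d y c = 3 * (g y c * Dh x d) - 3 * (g y d * Dh x c))
  simp only [contract_sub, contract_const_mul] at h
  rwa [contract_metric_right hinv (fun x => Dh x d),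
    contract_metric_right hinv (fun x => Dh x c)] at h

theorem trace_ac (hP : IsCKYHessian g Dh P) (hg : ∀ a b, g a b = g b a)
    (hinv : ∀ a b, ∑ c, ginv a c * g c b = if a = b then 1 else 0) (b d : ι) :
    2 * contract ginv (fun x y => P x b y d) - contract ginv (fun x y => P x y d b)
      - contract ginv (fun x y => P x d b y) = 3 * Dh b d - 3 * g b d * contract ginv Dh := by
  have h := contract_congr (ginv := ginv) fun x y => (by
      linear_combination 3 * hP x b y d + 3 * Dh x d * hg b y :
    2 * P x b y d - P x y d b - P x d b y = 3 * (g y b * Dh x d) - 3 * g b d * Dh x y)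
  simp only [contract_sub, contract_const_mul] at h
  rw [contract_metric_right hinv (fun x => Dh x d)] at h
  exact h

theorem trace_bc (hP : IsCKYHessian g Dh P) (hg : ∀ a b, g a b = g b a)
    (hginv : ∀ a b, ginv a b = ginv b a)
    (hinv : ∀ a b, ∑ c, ginv a c * g c b = if a = b then 1 else 0) (a d : ι) :
    2 * contract ginv (fun x y => P a x y d) - contract ginv (fun x y => P a x d y)
      - contract ginv (fun x y => P a d x y) = 3 * ((Fintype.card ι : ℝ) - 1) * Dh a d := by
  have h := contract_congr (ginv := ginv) fun x y => (by linear_combination 3 * hP a x y d :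
    2 * P a x y d - P a y d x - P a d x y = 3 * (g x y * Dh a d) - 3 * (g x d * Dh a y))
  simp only [contract_sub, contract_const_mul, contract_mul_const] at h
  rw [contract_swap hginv (fun x y => P a x d y), contract_metric hg hinv,
    contract_metric_left hginv hinv (fun y => Dh a y)] at h
  linear_combination h

theorem trace_cd (hP : IsCKYHessian g Dh P) (hg : ∀ a b, g a b = g b a)
    (hginv : ∀ a b, ginv a b = ginv b a)
    (hinv : ∀ a b, ∑ c, ginv a c * g c b = if a = b then 1 else 0) (a b : ι) :
    2 * contract ginv (fun x y => P a b x y) - contract ginv (fun x y => P a x y b)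
      - contract ginv (fun x y => P a x b y) = 0 := by
  have h := contract_congr (ginv := ginv) fun x y => (by
      linear_combination 3 * hP a b x y + 3 * Dh a y * hg b x - 3 * Dh a x * hg b y :
    2 * P a b x y - P a x y b - P a y b x = 3 * (g x b * Dh a y) - 3 * (g y b * Dh a x))
  simp only [contract_sub, contract_const_mul] at h
  rw [contract_swap hginv (fun x y => P a x b y),
    contract_metric_left hginv hinv (fun y => Dh a y),
    contract_metric_right hinv (fun x => Dh a x)] at h
  linear_combination h

end IsCKYHessian

section curvature

/-- `R^x{}_{bd}{}^f Y_{xf}`. -/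
def riemannPairing (ginv : ι → ι → ℝ) (Riem : ι → ι → ι → ι → ℝ) (Y : ι → ι → ℝ) (b d : ι) : ℝ :=
  contract ginv fun x y => contract ginv fun e f => Riem x b d e * Y y f

variable {ginv Y : ι → ι → ℝ} {Riem : ι → ι → ι → ι → ℝ}

theorem contract_riem_mul_swap_eq_neg (hY : ∀ a b, Y a b = -Y b a) (b c : ι) :
    (contract ginv fun x y => contract ginv fun e f => Riem x b c e * Y f y)
      = -riemannPairing ginv Riem Y b c := by
  rw [riemannPairing, ← contract_neg]
  refine contract_congr fun x y => ?_
  rw [← contract_neg]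
  exact contract_congr fun e f => by rw [hY, mul_neg]

theorem riemannPairing_antisymm (hRev : ∀ a b c d, Riem a b c d = Riem d c b a)
    (hY : ∀ a b, Y a b = -Y b a) (b d : ι) :
    riemannPairing ginv Riem Y d b = -riemannPairing ginv Riem Y b d := by
  unfold riemannPairing
  simp only [hRev _ d b]
  rw [contract_comm]
  exact contract_riem_mul_swap_eq_neg hY b d

variable [DecidableEq ι] {g Dh : ι → ι → ℝ} {Λ : ℝ} {P : ι → ι → ι → ι → ℝ}

theorem contract_riem_of_einstein (hg : ∀ a b, g a b = g b a)
    (hginv : ∀ a b, ginv a b = ginv b a)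
    (hinv : ∀ a b, ∑ c, ginv a c * g c b = if a = b then 1 else 0)
    (hEin : ∀ b e, contract ginv (fun x y => Riem x b y e) = Λ * g b e) (T : ι → ℝ) (b : ι) :
    contract ginv (fun x y => contract ginv fun e f => Riem x b y e * T f) = Λ * T b := by
  rw [contract_comm]
  simp only [contract_mul_const, hEin, hg b, mul_assoc, contract_const_mul]
  rw [contract_metric_left hginv hinv]

theorem contract_ricciIdentity_13 (hg : ∀ a b, g a b = g b a)
    (hginv : ∀ a b, ginv a b = ginv b a)
    (hinv : ∀ a b, ∑ c, ginv a c * g c b = if a = b then 1 else 0)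
    (hRicciId : ∀ a b c d, P a b c d - P b a c d
      = contract ginv fun e f => Riem a b c e * Y f d + Riem a b d e * Y c f)
    (hEin : ∀ b e, contract ginv (fun x y => Riem x b y e) = Λ * g b e) (b d : ι) :
    contract ginv (fun x y => P x b y d) - contract ginv (fun x y => P b x y d)
      = Λ * Y b d + riemannPairing ginv Riem Y b d := by
  rw [← contract_sub, contract_congr fun x y => hRicciId x b y d]
  simp only [contract_add]
  rw [contract_riem_of_einstein hg hginv hinv hEin (fun f => Y f d), riemannPairing]

theorem contract_ricciIdentity_14 (hg : ∀ a b, g a b = g b a)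
    (hginv : ∀ a b, ginv a b = ginv b a)
    (hinv : ∀ a b, ∑ c, ginv a c * g c b = if a = b then 1 else 0)
    (hY : ∀ a b, Y a b = -Y b a)
    (hRicciId : ∀ a b c d, P a b c d - P b a c d
      = contract ginv fun e f => Riem a b c e * Y f d + Riem a b d e * Y c f)
    (hEin : ∀ b e, contract ginv (fun x y => Riem x b y e) = Λ * g b e) (b c : ι) :
    contract ginv (fun x y => P x b c y) - contract ginv (fun x y => P b x c y)
      = Λ * Y c b - riemannPairing ginv Riem Y b c := by
  rw [← contract_sub, contract_congr fun x y => hRicciId x b c y]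
  simp only [contract_add]
  rw [contract_riem_mul_swap_eq_neg hY,
    contract_riem_of_einstein hg hginv hinv hEin (fun f => Y c f)]
  ring

theorem killingDefect_eq (hP : IsCKYHessian g Dh P) (hg : ∀ a b, g a b = g b a)
    (hginv : ∀ a b, ginv a b = ginv b a)
    (hinv : ∀ a b, ∑ c, ginv a c * g c b = if a = b then 1 else 0)
    (hY : ∀ a b, Y a b = -Y b a) (hRev : ∀ a b c d, Riem a b c d = Riem d c b a)
    (hRicciId : ∀ a b c d, P a b c d - P b a c d
      = contract ginv fun e f => Riem a b c e * Y f d + Riem a b d e * Y c f)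
    (hEin : ∀ b e, contract ginv (fun x y => Riem x b y e) = Λ * g b e) (b d : ι) :
    ((Fintype.card ι : ℝ) - 2) * (Dh b d + Dh d b) = -2 * g b d * contract ginv Dh := by
  have r13 := contract_ricciIdentity_13 hg hginv hinv hRicciId hEin b d
  have r13' := contract_ricciIdentity_13 hg hginv hinv hRicciId hEin d b
  have r14 := contract_ricciIdentity_14 hg hginv hinv hY hRicciId hEin b d
  have r14' := contract_ricciIdentity_14 hg hginv hinv hY hRicciId hEin d b
  have hW := riemannPairing_antisymm (ginv := ginv) hRev hY b d
  linear_combination (1/3) * (hP.trace_ac hg hinv b d + hP.trace_ac hg hinv d b)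
    + (1/6) * (hP.trace_ab hinv b d + hP.trace_ab hinv d b)
    - (1/3) * (hP.trace_bc hg hginv hinv b d + hP.trace_bc hg hginv hinv d b)
    - (1/6) * (hP.trace_cd hg hginv hinv b d + hP.trace_cd hg hginv hinv d b)
    - (1/2) * (r13 + r13') + (1/2) * (r14 + r14') - hW + contract ginv Dh * hg b d

end curvature

theorem add_swap_eq_zero_of_killingDefect [DecidableEq ι] {g ginv T : ι → ι → ℝ}
    (hdim : 2 < Fintype.card ι) (hg : ∀ a b, g a b = g b a) (hginv : ∀ a b, ginv a b = ginv b a)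
    (hinv : ∀ a b, ∑ c, ginv a c * g c b = if a = b then 1 else 0)
    (hT : ∀ p q, ((Fintype.card ι : ℝ) - 2) * (T p q + T q p) = -2 * g p q * contract ginv T)
    (p q : ι) : T p q + T q p = 0 := by
  have hn : (2 : ℝ) < Fintype.card ι := by exact_mod_cast hdim
  have htrace := contract_congr (ginv := ginv) hT
  simp only [contract_const_mul, contract_add, mul_assoc, contract_mul_const] at htrace
  rw [contract_swap hginv T, contract_metric hg hinv] at htrace
  have hθ : contract ginv T = 0 := by
    have : (4 * (Fintype.card ι : ℝ) - 4) * contract ginv T = 0 := by linear_combination htrace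
    exact (mul_eq_zero.mp this).resolve_left (by linarith)
  have := hT p q
  rw [hθ, mul_zero] at this
  exact (mul_eq_zero.mp this).resolve_left (by linarith)

end ConformalKillingYano

theorem statement13_general {ι : Type*} [Fintype ι] [DecidableEq ι]
    (hdim : 2 < Fintype.card ι)
    (g ginv : ι → ι → ℝ)
    (hgsymm : ∀ a b, g a b = g b a) (hginvsymm : ∀ a b, ginv a b = ginv b a)
    (hinv : ∀ a b, ∑ c, ginv a c * g c b = if a = b then (1 : ℝ) else 0)
    (Y : ι → ι → ℝ) (hYalt : ∀ a b, Y a b = -Y b a)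
    (Dh : ι → ι → ℝ) (DDY : ι → ι → ι → ι → ℝ)
    (Riem : ι → ι → ι → ι → ℝ) (Ric : ι → ι → ℝ) (Λ : ℝ)
    (hDCKY : ∀ a b c d, DDY a b c d
      = (1 / 3) * (DDY a b c d + DDY a c d b + DDY a d b c)
        + g b c * Dh a d - g b d * Dh a c)
    (hRicciId : ∀ a b c d, DDY a b c d - DDY b a c d
      = ∑ e, ∑ f, ginv e f * (Riem a b c e * Y f d + Riem a b d e * Y c f))
    (hRiemAsym₁ : ∀ a b c d, Riem a b c d = -Riem b a c d)
    (hRiemAsym₂ : ∀ a b c d, Riem a b c d = -Riem a b d c)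
    (hRiemPair : ∀ a b c d, Riem a b c d = Riem c d a b)
    (hRic : ∀ a b, Ric a b = ∑ c, ∑ d, ginv c d * Riem c a d b)
    (hEinstein : ∀ a b, Ric a b = Λ * g a b) :
    ∀ a b, Dh a b + Dh b a = 0 := by
  have hRev : ∀ a b c d, Riem a b c d = Riem d c b a := fun a b c d => by
    rw [hRiemPair, hRiemAsym₁, hRiemAsym₂, neg_neg]
  have hEin : ∀ b e, ConformalKillingYano.contract ginv (fun x y => Riem x b y e) = Λ * g b e :=
    fun b e => (hRic b e).symm.trans (hEinstein b e)
  exact ConformalKillingYano.add_swap_eq_zero_of_killingDefect hdim hgsymm hginvsymm hinv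
    (ConformalKillingYano.killingDefect_eq hDCKY hgsymm hginvsymm hinv hYalt hRev hRicciId hEin)

/-- Let the manifold be an Einstein space (`R_{ab} = Λ g_{ab}`) of
dimension `n > 2` and let `Y` be a conformal Killing–Yano tensor of order 2 with
associated one-form `h` (same setup as for the order-2 CKY integrability analysis).
Then `h` is a Killing vector field: `∇_a h_b + ∇_b h_a = 0`. -/
theorem statement13 {ι : Type*} [Fintype ι] [DecidableEq ι]
    (hdim : 2 < Fintype.card ι)
    (g ginv : ι → ι → ℝ)
    (hgsymm : ∀ a b, g a b = g b a) (hginvsymm : ∀ a b, ginv a b = ginv b a)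
    (hinv : ∀ a b, ∑ c, ginv a c * g c b = if a = b then (1 : ℝ) else 0)
    (Y : ι → ι → ℝ) (hYalt : ∀ a b, Y a b = -Y b a)
    (h : ι → ℝ) (D : ι → ι → ι → ℝ) (hDalt : ∀ a b c, D a b c = -D a c b)
    (Dh : ι → ι → ℝ) (DDY : ι → ι → ι → ι → ℝ)
    (Riem : ι → ι → ι → ι → ℝ) (Ric : ι → ι → ℝ) (Λ : ℝ)
    (hCKY : ∀ a b c, D a b c
      = (1 / 3) * (D a b c + D b c a + D c a b) + g a b * h c - g a c * h b)
    (hDCKY : ∀ a b c d, DDY a b c d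
      = (1 / 3) * (DDY a b c d + DDY a c d b + DDY a d b c)
        + g b c * Dh a d - g b d * Dh a c)
    (hRicciId : ∀ a b c d, DDY a b c d - DDY b a c d
      = ∑ e, ∑ f, ginv e f * (Riem a b c e * Y f d + Riem a b d e * Y c f))
    (hRiemAsym₁ : ∀ a b c d, Riem a b c d = -Riem b a c d)
    (hRiemAsym₂ : ∀ a b c d, Riem a b c d = -Riem a b d c)
    (hRiemPair : ∀ a b c d, Riem a b c d = Riem c d a b)
    (hBianchi : ∀ a b c d, Riem a b c d + Riem b c a d + Riem c a b d = 0)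
    (hRic : ∀ a b, Ric a b = ∑ c, ∑ d, ginv c d * Riem c a d b)
    (hEinstein : ∀ a b, Ric a b = Λ * g a b) :
    ∀ a b, Dh a b + Dh b a = 0 :=
  statement13_general hdim g ginv hgsymm hginvsymm hinv Y hYalt Dh DDY Riem Ric Λ hDCKY hRicciId
    hRiemAsym₁ hRiemAsym₂ hRiemPair hRic hEinstein
end
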